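/- arXiv:math/0606093 — 2 statements merged into one kernel-verified Lean document; each statement's English description precedes it below -/
import Mathlib

section
/- For any prime p and positive integer α, the binomial coefficient C(p^α, p) is congruent to p^(α−1) modulo p^α. -/
/-!
Absorption gives `C(m p, p) = m · C(m p - 1, p - 1)`, and by Lucas' theorem
`C(m p - 1, p - 1) ≡ 1 (mod p)`, because the last base-`p` digit of `m p - 1` is `p - 1`.
Hence `C(m p, p) ≡ m (mod m p)`; take `m = p ^ (α - 1)`.
-/

namespace Nat

theorem choose_mul_eq_mul_choose_sub_one (m : ℕ) {p : ℕ} (hp : 0 < p) :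
    (m * p).choose p = m * (m * p - 1).choose (p - 1) := by
  rcases m.eq_zero_or_pos with rfl | hm
  · simp [choose_eq_zero_of_lt hp]
  have hmp : m * p - 1 + 1 = m * p := Nat.sub_add_cancel (Nat.mul_pos hm hp)
  have h := add_one_mul_choose_eq (m * p - 1) (p - 1)
  rw [hmp, Nat.sub_add_cancel hp] at h
  exact Nat.eq_of_mul_eq_mul_right hp (by rw [← h, mul_right_comm])

theorem choose_mul_prime_sub_one_modEq_one {m p : ℕ} (hp : p.Prime) (hm : 0 < m) :
    (m * p - 1).choose (p - 1) ≡ 1 [MOD p] := by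
  have := Fact.mk hp
  have hdigits : m * p - 1 = p - 1 + p * (m - 1) := by
    obtain ⟨k, rfl⟩ := exists_eq_add_one_of_ne_zero hm.ne'
    have := hp.pos
    rw [Nat.add_sub_cancel, add_mul, one_mul, mul_comm]
    omega
  have hlt : p - 1 < p := Nat.sub_lt hp.pos one_pos
  have lucas := Choose.choose_modEq_choose_mod_mul_choose_div_nat
    (n := p - 1 + p * (m - 1)) (k := p - 1) (p := p)
  rw [add_mul_mod_self_left, Nat.mod_eq_of_lt hlt, Nat.div_eq_of_lt hlt,
    choose_self, choose_zero_right, mul_one] at lucas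
  rwa [hdigits]

theorem choose_mul_prime_modEq (m : ℕ) {p : ℕ} (hp : p.Prime) :
    (m * p).choose p ≡ m [MOD m * p] := by
  rcases m.eq_zero_or_pos with rfl | hm
  · simp [choose_eq_zero_of_lt hp.pos]
  rw [choose_mul_eq_mul_choose_sub_one m hp.pos]
  simpa using (choose_mul_prime_sub_one_modEq_one hp hm).mul_left' m

end Nat

/-- For a prime `p` and `α ≥ 1`, `C(p^α, p) ≡ p^(α-1) (mod p^α)`. -/
theorem choose_prime_pow_congr (p : ℕ) (hp : p.Prime) (α : ℕ) (hα : 1 ≤ α) :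
    Nat.choose (p ^ α) p ≡ p ^ (α - 1) [MOD p ^ α] := by
  obtain ⟨a, rfl⟩ := Nat.exists_eq_add_of_le' hα
  simpa [pow_succ] using Nat.choose_mul_prime_modEq (p ^ a) hp
end

section
/- Let u and v be basic commutators on letters x_1 < ⋯ < x_r in a free group. Then the 'shove' operation [u ← v], defined recursively by: [u ← v] = [v ← u] if v > u; [u ← v] = [[c_1 ← v], c_2] if v < u, u = [c_1, c_2], and c_2 > v; and [u ← v] = [u, v] otherwise, always terminates and produces a basic commutator of weight wt(u) + wt(v). -/
/-- Formal commutators on the letters `x_0 < x_1 < ⋯ < x_{r-1}`. -/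
inductive BC (r : ℕ) : Type
  | leaf : Fin r → BC r
  | comm : BC r → BC r → BC r

namespace BC

variable {r : ℕ}

/-- The weight of a formal commutator in the letters. -/
def wt : BC r → ℕ
  | leaf _ => 1
  | comm a b => wt a + wt b

/-- Size (used for termination). -/
def size : BC r → ℕ
  | leaf _ => 1
  | comm a b => size a + size b + 1

/-- An injective encoding of formal commutators into `ℕ`, used to fix a
definite total order among basic commutators of the same weight. -/
def enc : BC r → ℕ
  | leaf i => Nat.pair 0 i
  | comm a b => Nat.pair 1 (Nat.pair (enc a) (enc b))

/-- The order on formal commutators: first by weight, then by the fixed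
encoding within each weight. -/
def lt (a b : BC r) : Prop :=
  wt a < wt b ∨ (wt a = wt b ∧ enc a < enc b)

instance : DecidableRel (lt (r := r)) := fun a b => by
  unfold lt; infer_instance

theorem lt_asymm' {a b : BC r} (h : lt a b) : ¬ lt b a := by
  rcases h with h | ⟨he, h⟩ <;> rintro (h' | ⟨he', h'⟩) <;> omega

/-- Basic commutators: the letters are basic of weight 1, and `[c₁,c₂]` is
basic when `c₁, c₂` are basic, `c₁ > c₂`, and whenever `c₁ = [a,b]` we have
`b ≤ c₂`. -/
inductive IsBasic : BC r → Prop
  | leaf (i : Fin r) : IsBasic (leaf i)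
  | comm {c₁ c₂ : BC r} : IsBasic c₁ → IsBasic c₂ → lt c₂ c₁ →
      (∀ a b, c₁ = BC.comm a b → ¬ lt c₂ b) → IsBasic (BC.comm c₁ c₂)

/-- The shove operation `[u ← v]`: `[u ← v] = [v ← u]` if `v > u`;
`[u ← v] = [[c₁ ← v], c₂]` if `v < u`, `u = [c₁,c₂]` and `c₂ > v`;
`[u ← v] = [u,v]` otherwise. -/
def shove : BC r → BC r → BC r
  | u, v =>
    if h : lt u v then shove v u
    else
      match u with
      | leaf i => comm (leaf i) v
      | comm c₁ c₂ => if lt v c₂ then comm (shove c₁ v) c₂ else comm (comm c₁ c₂) v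
  termination_by u v => (size u + size v, if lt u v then 1 else 0)
  decreasing_by
  · exact Prod.Lex.right' _ (by omega) (by simp [h, lt_asymm' h])
  · exact Prod.Lex.left _ _ (by simp [size] <;> omega)


/-!
Induct along the recursion defining `shove`. Weights simply add. The only delicate
condition is the one on the right factor in the case `[[c₁ ← v], c₂]`: the right factor
of `[c₁ ← v]` is either `v` or the right factor of `c₁`, and both are `≤ c₂`.
-/

theorem one_le_wt (a : BC r) : 1 ≤ wt a := by
  induction a with
  | leaf => simp [wt]
  | comm a b ha hb => simp only [wt]; omega

theorem enc_injective : Function.Injective (enc (r := r)) := by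
  intro a
  induction a with
  | leaf i =>
    rintro (j | ⟨c, d⟩) h <;> simp only [enc, Nat.pair_eq_pair] at h
    · exact congrArg leaf (Fin.ext (by exact_mod_cast h.2))
    · omega
  | comm a b ha hb =>
    rintro (j | ⟨c, d⟩) h <;> simp only [enc, Nat.pair_eq_pair] at h
    · omega
    · rw [ha h.2.1, hb h.2.2]

theorem lt_irrefl' (a : BC r) : ¬ lt a a := by
  unfold lt; omega

theorem lt_trans' {a b c : BC r} (hab : lt a b) (hbc : lt b c) : lt a c := by
  unfold lt at *; omega

theorem lt_or_lt_of_ne' {a b : BC r} (h : a ≠ b) : lt a b ∨ lt b a := by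
  unfold lt
  by_contra! hc
  exact h (enc_injective (by omega))

theorem shove_of_lt {u v : BC r} (h : lt u v) : shove u v = shove v u := by
  rw [shove, dif_pos h]

theorem shove_leaf {i : Fin r} {v : BC r} (h : ¬ lt (leaf i) v) :
    shove (leaf i) v = comm (leaf i) v := by
  rw [shove, dif_neg h]

theorem shove_comm_of_lt {c₁ c₂ v : BC r} (h : ¬ lt (comm c₁ c₂) v) (hv : lt v c₂) :
    shove (comm c₁ c₂) v = comm (shove c₁ v) c₂ := by
  rw [shove, dif_neg h]; exact if_pos hv

theorem shove_comm_of_not_lt {c₁ c₂ v : BC r} (h : ¬ lt (comm c₁ c₂) v) (hv : ¬ lt v c₂) :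
    shove (comm c₁ c₂) v = comm (comm c₁ c₂) v := by
  rw [shove, dif_neg h]; exact if_neg hv

theorem wt_shove (u v : BC r) : wt (shove u v) = wt u + wt v := by
  induction u, v using shove.induct with
  | case1 u v h ih => rw [shove_of_lt h, ih]; omega
  | case2 v i h => rw [shove_leaf h]; rfl
  | case3 v c₁ c₂ h hv ih => simp only [shove_comm_of_lt h hv, wt, ih]; omega
  | case4 v c₁ c₂ h hv => rw [shove_comm_of_not_lt h hv]; rfl

theorem right_factor_shove {u v a b : BC r} (h : ¬ lt u v) (hab : shove u v = comm a b) :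
    b = v ∨ ∃ c, u = comm c b := by
  cases u with
  | leaf i =>
    rw [shove_leaf h, comm.injEq] at hab
    exact .inl hab.2.symm
  | comm c₁ c₂ =>
    by_cases hv : lt v c₂
    · rw [shove_comm_of_lt h hv, comm.injEq] at hab
      exact .inr ⟨c₁, hab.2 ▸ rfl⟩
    · rw [shove_comm_of_not_lt h hv, comm.injEq] at hab
      exact .inl hab.2.symm

theorem isBasic_shove {u v : BC r} (hu : IsBasic u) (hv : IsBasic v) (hne : u ≠ v) :
    IsBasic (shove u v) := by
  induction u, v using shove.induct with
  | case1 u v h ih => rw [shove_of_lt h]; exact ih hv hu hne.symm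
  | case2 v i h =>
    rw [shove_leaf h]
    exact .comm hu hv ((lt_or_lt_of_ne' hne).resolve_left h) (by simp)
  | case3 v c₁ c₂ h hvc₂ ih =>
    rw [shove_comm_of_lt h hvc₂]
    obtain _ | ⟨hc₁, hc₂, hc₂c₁, hright⟩ := hu
    have hvc₁ : lt v c₁ := lt_trans' hvc₂ hc₂c₁
    refine .comm (ih hc₁ hv fun he => lt_irrefl' v (he ▸ hvc₁)) hc₂ ?_ ?_
    · -- `[c₁ ← v]` is heavier than `c₁`, which is at least as heavy as `c₂`
      have := wt_shove c₁ v
      have := one_le_wt v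
      left; unfold lt at hc₂c₁; omega
    · intro a b hab
      rcases right_factor_shove (lt_asymm' hvc₁) hab with rfl | ⟨c, rfl⟩
      · exact lt_asymm' hvc₂
      · exact hright c b rfl
  | case4 v c₁ c₂ h hvc₂ =>
    rw [shove_comm_of_not_lt h hvc₂]
    refine .comm hu hv ((lt_or_lt_of_ne' hne).resolve_left h) ?_
    rintro a b ⟨⟩
    exact hvc₂

/-- The shove operation on basic commutators `u ≠ v` terminates (it is a total
function) and produces a basic commutator of weight `wt u + wt v`. -/
theorem shove_isBasic_wt {r : ℕ} (u v : BC r) (hu : IsBasic u)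
    (hv : IsBasic v) (hne : u ≠ v) :
    IsBasic (shove u v) ∧ wt (shove u v) = wt u + wt v :=
  ⟨isBasic_shove hu hv hne, wt_shove u v⟩

end BC
end
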